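/- arXiv:2507.21883 — 2 statements merged into one kernel-verified Lean document; each statement's English description precedes it below -/
import Mathlib

section
/- Let Σ be an n×n real PSD matrix with unit diagonal, let w: E → ℝ≥0 be nonnegative weights on a finite edge set E ⊆ {1..n}², and suppose Σ_{ij} < 1 for all (i,j) ∈ E with w_{ij} > 0. Then the ratio [(1/π) Σ_{(i,j)∈E} w_{ij} arccos(Σ_{ij})] / [(1/2) Σ_{(i,j)∈E} w_{ij} (1 - Σ_{ij})] is at least 0.878. -/
/-!
With `θ = arccos x` the pointwise inequality `0.439 π (1 - x) ≤ arccos x` becomes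
`0.439 π (1 - cos θ) ≤ θ` on `[0, π]`. For `θ ≤ 1.45` it follows from `1 - cos θ ≤ θ² / 2`;
near `π` it follows from the quartic Taylor bound for `cos (π - θ)`, which reduces it to a
polynomial inequality. Entries of a PSD matrix with unit diagonal lie in `[-1, 1]`, so the
pointwise bound applies to every edge, and summing with nonnegative weights gives the theorem.
-/

open Real Set

theorem cos_le_one_sub_sq_div_two_add_pow_four_div (x : ℝ) :
    cos x ≤ 1 - x ^ 2 / 2 + x ^ 4 / 24 := by
  wlog hx₀ : 0 ≤ x
  · simpa [Even.neg_pow (by decide : Even 4)] using this (-x) (by linarith)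
  let f (t : ℝ) : ℝ := 1 - t ^ 2 / 2 + t ^ 4 / 24 - cos t
  have hderiv (t : ℝ) : deriv f t = sin t - (t - t ^ 3 / 6) := by
    simp (disch := fun_prop) only [f, deriv_fun_sub, deriv_fun_add, deriv_const', deriv_div_const,
      deriv_fun_pow, deriv_id'', deriv_cos', Nat.cast_ofNat, Nat.add_one_sub_one, pow_one, mul_one]
    ring
  have hmono : MonotoneOn f (Ici 0) := by
    refine monotoneOn_of_deriv_nonneg (convex_Ici 0) (by fun_prop) (by fun_prop) fun t ht => ?_
    rw [interior_Ici] at ht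
    simpa [hderiv] using sin_ge_sub_cube (le_of_lt ht)
  simpa [f] using hmono self_mem_Ici hx₀ hx₀

theorem mul_pi_mul_one_sub_cos_le_self {θ : ℝ} (hθ₀ : 0 ≤ θ) (hθπ : θ ≤ π) :
    0.439 * π * (1 - cos θ) ≤ θ := by
  have hπ₁ := pi_gt_d6
  have hπ₂ := pi_lt_d6
  rcases le_or_gt θ 1.45 with hθ | hθ
  · nlinarith [one_sub_sq_div_two_le_cos (x := θ)]
  · set u := π - θ with hu
    have hcos : cos θ = -cos u := by rw [hu, cos_pi_sub, neg_neg]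
    have hu₀ : 0 ≤ u := by linarith
    have hu₁ : u ≤ 1.7 := by linarith
    -- `hpoly` is tight near `u = 0.8155`; `(u - 0.8155)² * hr` is its certificate.
    have hr : (0:ℝ) ≤ 1/2 - (u^2 + 2*0.8155*u + 3*0.8155^2)/24 := by nlinarith
    have hpoly : u ≤ 3.141592 * (1 - 0.439 * (2 - u^2/2 + u^4/24)) := by
      nlinarith [mul_nonneg (sq_nonneg (u - 0.8155)) hr]
    nlinarith [cos_le_one_sub_sq_div_two_add_pow_four_div u]

theorem mul_pi_mul_one_sub_le_arccos {x : ℝ} (hx₁ : -1 ≤ x) (hx₂ : x ≤ 1) :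
    0.439 * π * (1 - x) ≤ arccos x := by
  simpa [cos_arccos hx₁ hx₂] using
    mul_pi_mul_one_sub_cos_le_self (arccos_nonneg x) (arccos_le_pi x)

theorem Matrix.PosSemidef.two_mul_abs_apply_le {n : Type*} [Fintype n] [DecidableEq n]
    {S : Matrix n n ℝ} (hS : S.PosSemidef) (i j : n) : 2 * |S i j| ≤ S i i + S j j := by
  have hsym : S j i = S i j := by simpa using hS.1.apply i j
  have hquad (c : ℝ) : 0 ≤ S i i + c * (S i j + S j i) + c ^ 2 * S j j := by
    have h := hS.dotProduct_mulVec_nonneg (Pi.single i 1 + Pi.single j c)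
    simp only [star_trivial, Matrix.mulVec_add, Matrix.mulVec_single, MulOpposite.op_one, one_smul,
      op_smul_eq_smul, dotProduct_add, add_dotProduct, single_dotProduct, Matrix.col_apply, one_mul,
      dotProduct_smul, smul_eq_mul] at h
    linarith
  have hadd := hquad 1
  have hsub := hquad (-1)
  rcases abs_cases (S i j) with ⟨h, -⟩ | ⟨h, -⟩ <;> nlinarith

theorem stmt_12_general (n : ℕ) (S : Matrix (Fin n) (Fin n) ℝ)
    (hS : S.PosSemidef) (hdiag : ∀ i, S i i = 1)
    (E : Finset (Fin n × Fin n)) (w : Fin n × Fin n → ℝ) (hw : ∀ e ∈ E, 0 ≤ w e) :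
    0.878 * ((1 / 2) * ∑ e ∈ E, w e * (1 - S e.1 e.2)) ≤
      (1 / π) * ∑ e ∈ E, w e * arccos (S e.1 e.2) := by
  have hsum : 0.439 * π * ∑ e ∈ E, w e * (1 - S e.1 e.2) ≤
      ∑ e ∈ E, w e * arccos (S e.1 e.2) := by
    rw [Finset.mul_sum]
    refine Finset.sum_le_sum fun e he => ?_
    have hentry := hS.two_mul_abs_apply_le e.1 e.2
    rw [hdiag, hdiag] at hentry
    obtain ⟨hle, hge⟩ := abs_le.1 (by linarith : |S e.1 e.2| ≤ 1)
    calc 0.439 * π * (w e * (1 - S e.1 e.2))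
        = w e * (0.439 * π * (1 - S e.1 e.2)) := by ring
      _ ≤ w e * arccos (S e.1 e.2) :=
        mul_le_mul_of_nonneg_left (mul_pi_mul_one_sub_le_arccos hle hge) (hw e he)
  rw [one_div_mul_eq_div _ (∑ e ∈ E, w e * arccos (S e.1 e.2)), le_div_iff₀ pi_pos]
  linarith

/-- Goemans–Williamson ratio for weighted Max-Cut: if `Σ` is PSD with unit diagonal,
weights are nonnegative, and `Σ i j < 1` on edges with positive weight, then the
expected rounded cut `(1/π) ∑ w arccos Σ` is at least `0.878` times the expected
measured cut `(1/2) ∑ w (1 - Σ)`. -/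
theorem stmt_12 (n : ℕ) (S : Matrix (Fin n) (Fin n) ℝ)
    (hS : S.PosSemidef) (hdiag : ∀ i, S i i = 1)
    (E : Finset (Fin n × Fin n)) (w : Fin n × Fin n → ℝ) (hw : ∀ e ∈ E, 0 ≤ w e)
    (hlt : ∀ e ∈ E, 0 < w e → S e.1 e.2 < 1) :
    0.878 * ((1 / 2) * ∑ e ∈ E, w e * (1 - S e.1 e.2)) ≤
      (1 / π) * ∑ e ∈ E, w e * arccos (S e.1 e.2) :=
  stmt_12_general n S hS hdiag E w hw
end

section
/- Let h(ε) = 1 - ε·α_GW - (1-ε)·(2 arccos(-ε))/(π(1+ε)) with α_GW = 0.878. Then h(0) = 0, h(ε) ≤ 1 - α_GW for all ε ∈ [0, 0.689], and h(ε) = O(ε) as ε → 0⁺ (i.e., there exists K with h(ε) ≤ K ε on [0, 1/2]). -/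
/-! With `g x = 2 arccos x / (π (1 - x))` and `arccos (-ε) = π/2 + arcsin ε`, the bound
`g (-ε) ≥ 0.878` is exactly `arcsin ε ≥ π (0.439 ε - 0.061)`, i.e. `sin u ≤ ε` for
`u = π (0.439 ε - 0.061)`. On `[0, 0.689]` this follows from the fifth-order Taylor upper bound
of `sin` together with `π < 3.1416`; `g (-0.689) - 0.878 < 10⁻³`, so no lower-order
bound would do. Then `h ε = 1 - 0.878 ε - (1 - ε) g (-ε) ≤ 1 - 0.878`,
and `arccos (-ε) ≥ π/2` gives `g (-ε) ≥ 1/(1 + ε) ≥ 1 - ε`, hence `h ε ≤ 2 ε`. -/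

open Real

theorem monotoneOn_Ici_of_hasDerivAt {f f' : ℝ → ℝ} {a : ℝ}
    (hf : ∀ x, HasDerivAt f (f' x) x) (hf' : ∀ x, a < x → 0 ≤ f' x) : MonotoneOn f (Set.Ici a) :=
  monotoneOn_of_hasDerivWithinAt_nonneg (convex_Ici a)
    (fun x _ ↦ (hf x).continuousAt.continuousWithinAt) (fun x _ ↦ (hf x).hasDerivWithinAt)
    (fun x hx ↦ hf' x (by simpa using hx))

namespace Real

theorem cos_le_taylor_four {x : ℝ} (hx : 0 ≤ x) : cos x ≤ 1 - x ^ 2 / 2 + x ^ 4 / 24 := by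
  have hderiv (y : ℝ) : HasDerivAt (fun y ↦ 1 - y ^ 2 / 2 + y ^ 4 / 24 - cos y)
      (sin y - (y - y ^ 3 / 6)) y :=
    ((((hasDerivAt_pow 2 y).div_const 2).const_sub 1).add
      ((hasDerivAt_pow 4 y).div_const 24)).sub (hasDerivAt_cos y) |>.congr_deriv (by ring)
  have hmono := monotoneOn_Ici_of_hasDerivAt hderiv
    (fun y hy ↦ sub_nonneg.2 (sin_ge_sub_cube hy.le)) Set.self_mem_Ici hx hx
  simp only [cos_zero] at hmono
  linarith

theorem sin_le_taylor_five {x : ℝ} (hx : 0 ≤ x) : sin x ≤ x - x ^ 3 / 6 + x ^ 5 / 120 := by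
  have hderiv (y : ℝ) : HasDerivAt (fun y ↦ y - y ^ 3 / 6 + y ^ 5 / 120 - sin y)
      (1 - y ^ 2 / 2 + y ^ 4 / 24 - cos y) y :=
    (((hasDerivAt_id' y).sub ((hasDerivAt_pow 3 y).div_const 6)).add
      ((hasDerivAt_pow 5 y).div_const 120)).sub (hasDerivAt_sin y) |>.congr_deriv (by ring)
  have hmono := monotoneOn_Ici_of_hasDerivAt hderiv
    (fun y hy ↦ sub_nonneg.2 (cos_le_taylor_four hy.le)) Set.self_mem_Ici hx hx
  simp only [sin_zero] at hmono
  linarith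

theorem arccos_neg_eq_pi_div_two_add_arcsin (x : ℝ) : arccos (-x) = π / 2 + arcsin x := by
  rw [arccos_eq_pi_div_two_sub_arcsin, arcsin_neg, sub_neg_eq_add]

end Real

theorem affine_le_arcsin {ε : ℝ} (h0 : 0 ≤ ε) (h1 : ε ≤ 0.689) :
    π * (0.439 * ε - 0.061) ≤ arcsin ε := by
  have hπ := pi_pos
  rw [le_arcsin_iff_sin_le' ⟨by nlinarith, by nlinarith⟩]
  set u := π * (0.439 * ε - 0.061) with hu
  rcases le_or_gt u 0 with hu0 | hu0
  · linarith [sin_nonpos_of_nonpos_of_neg_pi_le hu0 (by rw [hu]; nlinarith)]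
  have hcoef : 0 < 0.439 * ε - 0.061 := pos_of_mul_pos_right hu0 hπ.le
  have hu_le : u ≤ 3.1416 * (0.439 * ε - 0.061) :=
    mul_le_mul_of_nonneg_right pi_lt_d4.le hcoef.le
  have hquintic : 0.439 * 3.1416 * (u - u ^ 3 / 6 + u ^ 5 / 120) ≤ u + 0.061 * 3.1416 := by
    have h : 0 ≤ 0.7587 - u := by linarith
    nlinarith [mul_nonneg h hu0.le, pow_nonneg h 2, pow_nonneg h 3, pow_nonneg h 4,
      pow_nonneg h 5]
  have hpoly : u - u ^ 3 / 6 + u ^ 5 / 120 ≤ ε := by nlinarith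
  exact (sin_le_taylor_five hu0.le).trans hpoly

/-- The Goemans–Williamson ratio function `g`; in the theorem,
`h ε = 1 - 0.878 ε - (1 - ε) g (-ε)`. -/
noncomputable def gwRatio (x : ℝ) : ℝ := 2 * arccos x / (π * (1 - x))

theorem le_gwRatio_neg {ε : ℝ} (h0 : 0 ≤ ε) (h1 : ε ≤ 0.689) : 0.878 ≤ gwRatio (-ε) := by
  rw [gwRatio, sub_neg_eq_add, le_div_iff₀ (by positivity),
    arccos_neg_eq_pi_div_two_add_arcsin]
  linarith [affine_le_arcsin h0 h1]

theorem one_sub_le_gwRatio_neg {ε : ℝ} (h0 : 0 ≤ ε) : 1 - ε ≤ gwRatio (-ε) := by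
  have harc : π / 2 ≤ arccos (-ε) := by
    rw [arccos_neg_eq_pi_div_two_add_arcsin]
    linarith [arcsin_nonneg.2 h0]
  rw [gwRatio, sub_neg_eq_add, le_div_iff₀ (by positivity)]
  nlinarith [mul_nonneg pi_pos.le (sq_nonneg ε)]

/-- The deficiency function `h(ε) = 1 - ε α_GW - (1-ε) (2 arccos (-ε))/(π (1+ε))`
with `α_GW = 0.878` satisfies `h 0 = 0`, `h ε ≤ 1 - α_GW` on `[0, 0.689]`, and
`h(ε) = O(ε)`: there is `K` with `h ε ≤ K ε` on `[0, 1/2]`. -/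
theorem stmt_16 :
    (1 - 0 * 0.878 - (1 - 0) * (2 * arccos (-(0 : ℝ))) / (π * (1 + 0)) = 0) ∧
      (∀ ε ∈ Set.Icc (0 : ℝ) 0.689,
        1 - ε * 0.878 - (1 - ε) * (2 * arccos (-ε)) / (π * (1 + ε)) ≤ 1 - 0.878) ∧
      ∃ K : ℝ, ∀ ε ∈ Set.Icc (0 : ℝ) (1 / 2),
        1 - ε * 0.878 - (1 - ε) * (2 * arccos (-ε)) / (π * (1 + ε)) ≤ K * ε := by
  have hg (ε : ℝ) : (1 - ε) * (2 * arccos (-ε)) / (π * (1 + ε)) = (1 - ε) * gwRatio (-ε) := by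
    rw [gwRatio, sub_neg_eq_add, mul_div_assoc]
  refine ⟨?_, fun ε ⟨h0, h1⟩ ↦ ?_, 2, fun ε ⟨h0, h1⟩ ↦ ?_⟩
  · rw [neg_zero, arccos_zero]
    field_simp
    ring
  · have hg_ge := mul_le_mul_of_nonneg_left (le_gwRatio_neg h0 h1) (by linarith : 0 ≤ 1 - ε)
    rw [hg]
    linarith
  · have hg_ge := mul_le_mul_of_nonneg_left (one_sub_le_gwRatio_neg h0) (by linarith : 0 ≤ 1 - ε)
    rw [hg]
    nlinarith
end
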